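/- arXiv:2504.10729 — 2 statements merged into one kernel-verified Lean document; each statement's English description precedes it below -/
import Mathlib

section
/- Fix real parameters α, β, γ with α ≠ 0 and α = γ. Let J(x,y,z) be the 3×3 skew-symmetric matrix with J₁₂ = z, J₁₃ = −y, J₂₃ = 0, and let R(x,y,z) = (1/α) times the symmetric matrix with entries R₁₁ = α², R₁₂ = α(α−γ), R₁₃ = 0, R₂₂ = 0, R₂₃ = γy, R₃₃ = −βz (the Poisson and resistance matrices of the Chen system). Then the skew-symmetric matrix N = JR + RJ, identified with the vector field N(x,y,z) = (N₃₂, N₁₃, N₂₁), satisfies the Jacobi identity N·(∇×N) = 0 at every point of ℝ³. -/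
set_option linter.unusedVariables false

open Matrix

/-- Partial derivative with respect to the first variable. -/
noncomputable def pd1 (f : ℝ → ℝ → ℝ → ℝ) (x y z : ℝ) : ℝ := deriv (fun t => f t y z) x
/-- Partial derivative with respect to the second variable. -/
noncomputable def pd2 (f : ℝ → ℝ → ℝ → ℝ) (x y z : ℝ) : ℝ := deriv (fun t => f x t z) y
/-- Partial derivative with respect to the third variable. -/
noncomputable def pd3 (f : ℝ → ℝ → ℝ → ℝ) (x y z : ℝ) : ℝ := deriv (fun t => f x y t) z

/-- Poisson matrix of the Chen system. -/
noncomputable def Jmat (x y z : ℝ) : Matrix (Fin 3) (Fin 3) ℝ :=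
  !![0, z, -y; -z, 0, 0; y, 0, 0]

/-- Resistance matrix of the Chen system. -/
noncomputable def Rmat (α β γ : ℝ) (x y z : ℝ) : Matrix (Fin 3) (Fin 3) ℝ :=
  (1 / α) • !![α ^ 2, α * (α - γ), 0; α * (α - γ), 0, γ * y; 0, γ * y, -β * z]

/-- `N = JR + RJ`. -/
noncomputable def Nmat (α β γ : ℝ) (x y z : ℝ) : Matrix (Fin 3) (Fin 3) ℝ :=
  Jmat x y z * Rmat α β γ x y z + Rmat α β γ x y z * Jmat x y z

/-- First component of the vector field associated to `N`: `N₃₂`. -/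
noncomputable def N1 (α β γ : ℝ) (x y z : ℝ) : ℝ := Nmat α β γ x y z 2 1
/-- Second component: `N₁₃`. -/
noncomputable def N2 (α β γ : ℝ) (x y z : ℝ) : ℝ := Nmat α β γ x y z 0 2
/-- Third component: `N₂₁`. -/
noncomputable def N3 (α β γ : ℝ) (x y z : ℝ) : ℝ := Nmat α β γ x y z 1 0

/-- For the Chen system with `α ≠ 0` and `α = γ`, the higher-degree matrix `N = JR + RJ`
satisfies the Jacobi identity `N·(∇×N) = 0` at every point of `ℝ³`. -/
theorem stmt_3 (α β γ : ℝ) (hα : α ≠ 0) (hγ : α = γ) (x y z : ℝ) :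
    N1 α β γ x y z * (pd2 (N3 α β γ) x y z - pd3 (N2 α β γ) x y z)
      + N2 α β γ x y z * (pd3 (N1 α β γ) x y z - pd1 (N3 α β γ) x y z)
      + N3 α β γ x y z * (pd1 (N2 α β γ) x y z - pd2 (N1 α β γ) x y z) = 0 := by
  have hN1 : ∀ x y z : ℝ, N1 α β γ x y z = 0 := by
    intro x y z
    simp [N1, Nmat, Jmat, Rmat, Matrix.mul_apply, Fin.sum_univ_three, Matrix.vecHead, Matrix.vecTail, ← hγ]
    try ring
  have hN3 : ∀ x y z : ℝ, N3 α β γ x y z =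
      (1 / α) * (γ * y * y) + (1 / α) * (-(α ^ 2) * z) := by
    intro x y z
    simp [N3, Nmat, Jmat, Rmat, Matrix.mul_apply, Fin.sum_univ_three, Matrix.vecHead, Matrix.vecTail]
    ring
  have hN2 : ∀ x y z : ℝ, N2 α β γ x y z =
      (1 / α) * (γ * y * z + β * z * y - α ^ 2 * y - α * (α - γ) * z * 0) := by
    intro x y z
    simp [N2, Nmat, Jmat, Rmat, Matrix.mul_apply, Fin.sum_univ_three, Matrix.vecHead, Matrix.vecTail]
    ring
  have h1 : pd3 (N1 α β γ) x y z = 0 := by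
    simp [pd3, funext fun t => hN1 x y t]
  have h2 : pd1 (N3 α β γ) x y z = 0 := by
    have : (fun t => N3 α β γ t y z) = fun _ => (1 / α) * (γ * y * y) + (1 / α) * (-(α ^ 2) * z) := by
      funext t; exact hN3 t y z
    simp [pd1, this]
  have h3 : pd1 (N2 α β γ) x y z = 0 := by
    have : (fun t => N2 α β γ t y z) = fun _ =>
        (1 / α) * (γ * y * z + β * z * y - α ^ 2 * y - α * (α - γ) * z * 0) := by
      funext t; exact hN2 t y z
    simp [pd1, this]
  have h4 : pd2 (N1 α β γ) x y z = 0 := by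
    simp [pd2, funext fun t => hN1 x t z]
  rw [hN1, h1, h2, h3, h4]
  ring
end

section
/- Fix real parameters α, β, γ with α ≠ 0. Let H(x,y,z) = x²/2 − αz, let J(x,y,z) be the skew-symmetric matrix with J₁₂ = z, J₁₃ = −y, J₂₃ = 0, and let R(x,y,z) = (1/α) times the symmetric matrix with entries R₁₁ = α², R₁₂ = α(α−γ), R₁₃ = 0, R₂₂ = 0, R₂₃ = γy, R₃₃ = −βz. Then for every (x,y,z) ∈ ℝ³, (J − R)∇H = (αy − αx, (γ−α)x + γy − xz, xy − βz), i.e. the Chen system is a resistive-Hamiltonian system. Moreover ∇H·((J−R)∇H) = −α(x² − βz), the divergence of this vector field is identically −α − β + γ, and the Poisson vector associated to J satisfies ∇×J = 0. -/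
set_option linter.unusedVariables false

open Matrix

/-- Hamiltonian of the Chen system. -/
noncomputable def H (α : ℝ) (x y z : ℝ) : ℝ := x ^ 2 / 2 - α * z

/-- Gradient of `H`. -/
noncomputable def gradH (α : ℝ) (x y z : ℝ) : Fin 3 → ℝ :=
  ![pd1 (H α) x y z, pd2 (H α) x y z, pd3 (H α) x y z]

/-- The resistive-Hamiltonian vector field `(J − R)∇H`. -/
noncomputable def F (α β γ : ℝ) (x y z : ℝ) : Fin 3 → ℝ :=
  (Jmat x y z - Rmat α β γ x y z).mulVec (gradH α x y z)

lemma gradH_eq (α x y z : ℝ) : gradH α x y z = ![x, 0, -α] := by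
  have h1 : pd1 (H α) x y z = x := by
    have : HasDerivAt (fun t : ℝ => t ^ 2 / 2 - α * z) (2 * x ^ 1 / 2) x :=
      ((hasDerivAt_pow 2 x).div_const 2).sub_const (α * z)
    simpa [pd1, H] using this.deriv
  have h2 : pd2 (H α) x y z = 0 := by
    simp [pd2, H]
  have h3 : pd3 (H α) x y z = -α := by
    have : HasDerivAt (fun t : ℝ => x ^ 2 / 2 - α * t) (-(α * 1)) z :=
      ((hasDerivAt_id z).const_mul α).const_sub (x ^ 2 / 2)
    simpa [pd3, H] using this.deriv
  simp [gradH, h1, h2, h3]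

lemma F_eq (α β γ : ℝ) (hα : α ≠ 0) (x y z : ℝ) :
    F α β γ x y z = ![α * y - α * x, (γ - α) * x + γ * y - x * z, x * y - β * z] := by
  funext i
  fin_cases i <;>
    simp [F, Jmat, Rmat, gradH_eq, mulVec, dotProduct, Fin.sum_univ_three] <;>
    field_simp <;> ring

/-- The Chen system (with `α ≠ 0`) is a resistive-Hamiltonian system: `(J − R)∇H` gives
its equations of motion; moreover `∇H·((J−R)∇H) = −α(x² − βz)`, the divergence of the
vector field is identically `−α − β + γ`, and the Poisson vector `(0, −y, −z)` associated
to `J` satisfies `∇×J = 0`. -/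
theorem stmt_10 (α β γ : ℝ) (hα : α ≠ 0) :
    (∀ x y z : ℝ, F α β γ x y z =
      ![α * y - α * x, (γ - α) * x + γ * y - x * z, x * y - β * z]) ∧
    (∀ x y z : ℝ, gradH α x y z ⬝ᵥ F α β γ x y z = -α * (x ^ 2 - β * z)) ∧
    (∀ x y z : ℝ,
      pd1 (fun x y z => F α β γ x y z 0) x y z
        + pd2 (fun x y z => F α β γ x y z 1) x y z
        + pd3 (fun x y z => F α β γ x y z 2) x y z = -α - β + γ) ∧
    (∀ x y z : ℝ,
      (pd2 (fun x y z => Jmat x y z 1 0) x y z - pd3 (fun x y z => Jmat x y z 0 2) x y z,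
       pd3 (fun x y z => Jmat x y z 2 1) x y z - pd1 (fun x y z => Jmat x y z 1 0) x y z,
       pd1 (fun x y z => Jmat x y z 0 2) x y z - pd2 (fun x y z => Jmat x y z 2 1) x y z)
        = ((0 : ℝ), (0 : ℝ), (0 : ℝ))) := by
  refine ⟨fun x y z => F_eq α β γ hα x y z, fun x y z => ?_, fun x y z => ?_, fun x y z => ?_⟩
  · rw [F_eq α β γ hα, gradH_eq]
    simp [dotProduct, Fin.sum_univ_three]
    ring
  · have h0 : ∀ x y z : ℝ, F α β γ x y z 0 = α * y - α * x := by
      intro x y z; rw [F_eq α β γ hα]; simp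
    have h1 : ∀ x y z : ℝ, F α β γ x y z 1 = (γ - α) * x + γ * y - x * z := by
      intro x y z; rw [F_eq α β γ hα]; simp
    have h2 : ∀ x y z : ℝ, F α β γ x y z 2 = x * y - β * z := by
      intro x y z; rw [F_eq α β γ hα]; simp
    have d1 : pd1 (fun x y z => F α β γ x y z 0) x y z = -α := by
      have : HasDerivAt (fun t : ℝ => α * y - α * t) (-(α * 1)) x :=
        ((hasDerivAt_id x).const_mul α).const_sub (α * y)
      have := this.deriv
      simp only [pd1, h0]
      simpa using this
    have d2 : pd2 (fun x y z => F α β γ x y z 1) x y z = γ := by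
      have : HasDerivAt (fun t : ℝ => (γ - α) * x + γ * t - x * z) (γ * 1) y :=
        (((hasDerivAt_id y).const_mul γ).const_add ((γ - α) * x)).sub_const (x * z)
      have := this.deriv
      simp only [pd2, h1]
      simpa using this
    have d3 : pd3 (fun x y z => F α β γ x y z 2) x y z = -β := by
      have : HasDerivAt (fun t : ℝ => x * y - β * t) (-(β * 1)) z :=
        ((hasDerivAt_id z).const_mul β).const_sub (x * y)
      have := this.deriv
      simp only [pd3, h2]
      simpa using this
    rw [d1, d2, d3]; ring
  · simp [pd1, pd2, pd3, Jmat]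
end
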